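/- For every family of Boolean functions F = {f_n}_{n∈ℕ} (f_n of arity n), there exist a constant c > 0 and n₀ ∈ ℕ such that for all n ≥ n₀, NeciporukLB^{BF}_F(n) ≤ c·n²/log₂ n; i.e. NeciporukLB^{BF}_F(n) ∈ O(n²/log₂ n). -/

import Mathlib

def subfun {n : ℕ} (f : (Fin n → Bool) → Bool) (V : Finset (Fin n))
    (ρ : {i : Fin n // i ∉ V} → Bool) : ({i : Fin n // i ∈ V} → Bool) → Bool :=
  fun y => f fun i => if h : i ∈ V then y ⟨i, h⟩ else ρ ⟨i, h⟩

noncomputable def numSubfuns {n : ℕ} (f : (Fin n → Bool) → Bool) (V : Finset (Fin n)) : ℕ :=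
  (Set.range (subfun f V)).ncard
def IsPartition {n p : ℕ} (V : Fin p → Finset (Fin n)) : Prop :=
  (∀ i, (V i).Nonempty) ∧ (∀ i j, i ≠ j → Disjoint (V i) (V j)) ∧ ∀ x : Fin n, ∃ i, x ∈ V i
inductive Formula (n : ℕ) : Type where
  | const : Bool → Formula n
  | lit : Fin n → Bool → Formula n
  | node : (Bool → Bool → Bool) → Formula n → Formula n → Formula n

namespace Formula

def eval {n : ℕ} : Formula n → (Fin n → Bool) → Bool
  | const b, _ => b
  | lit i pos, a => if pos then a i else !(a i)
  | node g φ ψ, a => g (φ.eval a) (ψ.eval a)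

def size {n : ℕ} : Formula n → ℕ
  | const _ => 0
  | lit _ _ => 1
  | node _ φ ψ => φ.size + ψ.size

end Formula

noncomputable def BFc {n : ℕ} (f : (Fin n → Bool) → Bool) : ℕ :=
  sInf {s | ∃ φ : Formula n, φ.size = s ∧ ∀ a, φ.eval a = f a}
def IsNeciporuk (M : ∀ n : ℕ, ((Fin n → Bool) → Bool) → ℕ) (b : ℕ → ℕ) : Prop :=
  (∀ m m' : ℕ, 0 < m → m ≤ m' → b m ≤ b m') ∧
  ∀ (n p : ℕ) (f : (Fin n → Bool) → Bool) (V : Fin p → Finset (Fin n)),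
    IsPartition V → (∑ i, b (numSubfuns f (V i))) ≤ M n f

/-! ### Auxiliary definitions: the multiplexer formula -/

def idx (v k : ℕ) : Fin (v + 2^v) :=
  ⟨k % (v + 2^v), Nat.mod_lt _ (by positivity)⟩

def muxF (v : ℕ) : ℕ → ℕ → Formula (v + 2^v)
  | 0, base => .lit (idx v (v + base)) true
  | w+1, base => .node (· || ·)
      (.node (· && ·) (.lit (idx v w) false) (muxF v w base))
      (.node (· && ·) (.lit (idx v w) true) (muxF v w (base + 2^w)))

lemma muxF_size (v : ℕ) : ∀ w base, (muxF v w base).size + 2 ≤ 3 * 2^w := by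
  intro w
  induction w with
  | zero => intro base; simp [muxF, Formula.size]
  | succ w ih =>
    intro base
    have h1 := ih base
    have h2 := ih (base + 2^w)
    simp only [muxF, Formula.size]
    have : 3 * 2^(w+1) = 3 * 2^w + 3 * 2^w := by ring
    omega

def valv (v w : ℕ) (x : Fin (v + 2^v) → Bool) : ℕ :=
  ∑ i ∈ Finset.range w, if x (idx v i) then 2^i else 0

lemma muxF_eval (v : ℕ) (x : Fin (v + 2^v) → Bool) :
    ∀ w base, (muxF v w base).eval x = x (idx v (v + base + valv v w x)) := by
  intro w
  induction w with
  | zero => intro base; simp [muxF, Formula.eval, valv]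
  | succ w ih =>
    intro base
    have hval : valv v (w+1) x = valv v w x + (if x (idx v w) then 2^w else 0) :=
      Finset.sum_range_succ _ _
    cases h : x (idx v w) with
    | false =>
      simp only [muxF, Formula.eval, h, ih, hval]
      norm_num
    | true =>
      simp only [muxF, Formula.eval, h, ih, hval]
      norm_num
      congr 2
      omega

lemma sumBits : ∀ (v a : ℕ), a < 2^v →
    (∑ i ∈ Finset.range v, if Nat.testBit a i then 2^i else 0) = a := by
  intro v
  induction v with
  | zero => intro a ha; interval_cases a; simp
  | succ v ih =>
    intro a ha
    rw [Finset.sum_range_succ]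
    have h1 : (∑ i ∈ Finset.range v, if Nat.testBit a i then 2^i else 0)
        = (∑ i ∈ Finset.range v, if Nat.testBit (a % 2^v) i then 2^i else 0) := by
      refine Finset.sum_congr rfl fun i hi => ?_
      rw [Nat.testBit_mod_two_pow]
      simp [Finset.mem_range.mp hi]
    have h2 := ih (a % 2^v) (Nat.mod_lt _ (by positivity))
    have h4 := Nat.div_add_mod a (2^v)
    have hdiv : a / 2^v < 2 := by
      rw [Nat.div_lt_iff_lt_mul (by positivity)]
      rw [pow_succ] at ha
      omega
    have h3 : (if Nat.testBit a v then 2^v else 0) = 2^v * (a / 2^v) := by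
      rw [Nat.testBit_eq_decide_div_mod_eq]
      interval_cases h : a / 2^v <;> simp
    rw [h1, h2, h3]
    omega

def addrV (v : ℕ) : Finset (Fin (v + 2^v)) :=
  (Finset.range v).attachFin (fun m hm => by
    have h1 := Finset.mem_range.mp hm
    have h2 : 0 < 2^v := by positivity
    omega)

lemma mem_addrV {v : ℕ} (i : Fin (v + 2^v)) : i ∈ addrV v ↔ (i : ℕ) < v := by
  simp [addrV, Finset.mem_attachFin]

lemma card_addrV (v : ℕ) : (addrV v).card = v := by
  simp [addrV, Finset.card_attachFin]

noncomputable def muxFun (v : ℕ) : (Fin (v + 2^v) → Bool) → Bool := (muxF v v 0).eval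

lemma subfun_muxFun (v : ℕ) (ρ : {i : Fin (v + 2^v) // i ∉ addrV v} → Bool)
    (j : {i : Fin (v + 2^v) // i ∉ addrV v}) :
    subfun (muxFun v) (addrV v) ρ (fun s => Nat.testBit ((j.1 : ℕ) - v) (s.1 : ℕ)) = ρ j := by
  have hjv : v ≤ (j.1 : ℕ) := by
    by_contra h
    exact j.2 ((mem_addrV j.1).mpr (by omega))
  have hjlt : (j.1 : ℕ) < v + 2^v := j.1.isLt
  set a := (j.1 : ℕ) - v with hadef
  have ha : a < 2^v := by omega
  set y : {i : Fin (v + 2^v) // i ∈ addrV v} → Bool :=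
    fun s => Nat.testBit a (s.1 : ℕ) with hydef
  set x : Fin (v + 2^v) → Bool :=
    fun i => if h : i ∈ addrV v then y ⟨i, h⟩ else ρ ⟨i, h⟩ with hxdef
  show (muxF v v 0).eval x = ρ j
  rw [muxF_eval]
  have hval : valv v v x = a := by
    rw [← sumBits v a ha]
    refine Finset.sum_congr rfl fun i hi => ?_
    have hi' : i < v := Finset.mem_range.mp hi
    have hival : ((idx v i : Fin (v + 2^v)) : ℕ) = i := by
      have h2 : 0 < 2^v := by positivity
      simp only [idx]
      exact Nat.mod_eq_of_lt (by omega)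
    have hmem : idx v i ∈ addrV v := (mem_addrV _).mpr (by omega)
    rw [hxdef]
    simp only [hmem, dif_pos, hydef, hival]
  rw [hval]
  have hidx : idx v (v + 0 + a) = j.1 := by
    apply Fin.ext
    simp only [idx]
    rw [Nat.mod_eq_of_lt (by omega)]
    omega
  rw [hidx, hxdef]
  simp [j.2]

lemma numSubfuns_muxFun (v : ℕ) : 2^(2^v) ≤ numSubfuns (muxFun v) (addrV v) := by
  have hinj : Function.Injective (subfun (muxFun v) (addrV v)) := by
    intro ρ ρ' hew
    funext j
    have h1 := subfun_muxFun v ρ j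
    have h2 := subfun_muxFun v ρ' j
    rw [← h1, ← h2, hew]
  unfold numSubfuns
  rw [← Set.image_univ, Set.ncard_image_of_injective _ hinj, Set.ncard_univ,
    Nat.card_eq_fintype_card, Fintype.card_fun]
  have hc : Fintype.card {i : Fin (v + 2^v) // i ∉ addrV v} = 2^v := by
    rw [Fintype.card_subtype_compl]
    simp [Fintype.card_coe, card_addrV]
  rw [hc]
  simp

def muxPart (v : ℕ) : Fin (1 + 2^v) → Finset (Fin (v + 2^v)) :=
  fun i => if (i : ℕ) = 0 then addrV v else
    {⟨v + ((i : ℕ) - 1), by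
      have h1 := i.isLt
      have h2 : 0 < 2^v := by positivity
      omega⟩}

lemma muxPart_isPartition {v : ℕ} (hv : 1 ≤ v) : IsPartition (muxPart v) := by
  refine ⟨?_, ?_, ?_⟩
  · intro i
    by_cases h : (i : ℕ) = 0
    · have h0 : muxPart v i = addrV v := by simp [muxPart, h]
      rw [h0]
      exact ⟨⟨0, by positivity⟩, (mem_addrV _).mpr (by show 0 < v; omega)⟩
    · simp only [muxPart, if_neg h]
      exact Finset.singleton_nonempty _
  · intro i j hne
    rw [Finset.disjoint_left]
    intro z hzi hzj
    by_cases hi : (i : ℕ) = 0 <;> by_cases hj : (j : ℕ) = 0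
    · exact hne (Fin.ext (hi.trans hj.symm))
    · simp only [muxPart, hi, if_pos, if_neg hj] at hzi hzj
      have h1 : (z : ℕ) < v := (mem_addrV z).mp hzi
      have h2 : (z : ℕ) = v + ((j : ℕ) - 1) := by
        rw [Finset.mem_singleton] at hzj; rw [hzj]
      omega
    · simp only [muxPart, hj, if_pos, if_neg hi] at hzi hzj
      have h1 : (z : ℕ) < v := (mem_addrV z).mp hzj
      have h2 : (z : ℕ) = v + ((i : ℕ) - 1) := by
        rw [Finset.mem_singleton] at hzi; rw [hzi]
      omega
    · simp only [muxPart, if_neg hi, if_neg hj, Finset.mem_singleton] at hzi hzj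
      apply hne
      apply Fin.ext
      have h1 : (z : ℕ) = v + ((i : ℕ) - 1) := by rw [hzi]
      have h2 : (z : ℕ) = v + ((j : ℕ) - 1) := by rw [hzj]
      omega
  · intro x
    by_cases h : (x : ℕ) < v
    · have h0 : muxPart v ⟨0, by positivity⟩ = addrV v := by simp [muxPart]
      exact ⟨⟨0, by positivity⟩, by rw [h0]; exact (mem_addrV x).mpr h⟩
    · have hx := x.isLt
      refine ⟨⟨(x : ℕ) - v + 1, by omega⟩, ?_⟩
      have hne : (((⟨(x : ℕ) - v + 1, by omega⟩ : Fin (1 + 2^v)) : ℕ)) ≠ 0 := by simp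
      simp only [muxPart, if_neg hne, Finset.mem_singleton]
      apply Fin.ext
      simp only [Fin.val_mk]
      omega

lemma key_bound {b : ℕ → ℕ} (hb : IsNeciporuk (fun _ f => BFc f) b) {v : ℕ} (hv : 1 ≤ v) :
    b (2^(2^v)) ≤ 3 * 2^v := by
  obtain ⟨hmono, hnec⟩ := hb
  have hsum := hnec (v + 2^v) (1 + 2^v) (muxFun v) (muxPart v) (muxPart_isPartition hv)
  have hBF : BFc (muxFun v) ≤ 3 * 2^v := by
    have hmem : (muxF v v 0).size ∈
        {s | ∃ φ : Formula (v + 2^v), φ.size = s ∧ ∀ a, φ.eval a = muxFun v a} :=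
      ⟨muxF v v 0, rfl, fun a => rfl⟩
    have h1 := Nat.sInf_le hmem
    have h2 := muxF_size v v 0
    unfold BFc
    omega
  have hzero : muxPart v ⟨0, by positivity⟩ = addrV v := if_pos rfl
  have h0 : b (numSubfuns (muxFun v) (addrV v)) ≤
      ∑ i, b (numSubfuns (muxFun v) (muxPart v i)) := by
    rw [← hzero]
    exact Finset.single_le_sum (f := fun i => b (numSubfuns (muxFun v) (muxPart v i)))
      (fun i _ => Nat.zero_le _) (Finset.mem_univ (⟨0, by positivity⟩ : Fin (1 + 2^v)))
  have hm := hmono (2^(2^v)) (numSubfuns (muxFun v) (addrV v)) (by positivity)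
    (numSubfuns_muxFun v)
  calc b (2^(2^v)) ≤ b (numSubfuns (muxFun v) (addrV v)) := hm
    _ ≤ ∑ i, b (numSubfuns (muxFun v) (muxPart v i)) := h0
    _ ≤ BFc (muxFun v) := hsum
    _ ≤ 3 * 2^v := hBF

lemma lemmaN {v n : ℕ} (hv : 1 ≤ v) (h : 2^v ≤ n) : 2^v * Nat.log 2 n ≤ 2 * v * n := by
  have hp : 0 < 2^v := by positivity
  have hn0 : n ≠ 0 := by omega
  have hvL : v ≤ Nat.log 2 n := (Nat.le_log_iff_pow_le one_lt_two hn0).mpr h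
  set L := Nat.log 2 n with hLdef
  have h2L : 2^L ≤ n := Nat.pow_log_le_self 2 hn0
  set d := L - v with hd
  have hdL : L = v + d := by omega
  have hdp : d + 1 ≤ 2^d := Nat.lt_two_pow_self (n := d)
  have hstep : 2 * v * (d + 1) ≤ 2 * v * 2^d := Nat.mul_le_mul_left _ hdp
  have hLle : L ≤ 2 * v * 2^d := by nlinarith
  calc 2^v * L ≤ 2^v * (2 * v * 2^d) := Nat.mul_le_mul_left _ hLle
    _ = 2 * v * (2^v * 2^d) := by ring
    _ = 2 * v * 2^L := by rw [← pow_add, ← hdL]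
    _ ≤ 2 * v * n := Nat.mul_le_mul_left _ h2L

lemma numSubfuns_pos {n : ℕ} (f : (Fin n → Bool) → Bool) (V : Finset (Fin n)) :
    0 < numSubfuns f V := by
  rw [numSubfuns, Set.ncard_pos (Set.toFinite _)]
  exact ⟨_, ⟨fun _ => false, rfl⟩⟩

lemma numSubfuns_le_pow {n : ℕ} (f : (Fin n → Bool) → Bool) (V : Finset (Fin n)) :
    numSubfuns f V ≤ 2^(2^V.card) := by
  have h := Set.ncard_le_ncard (Set.subset_univ (Set.range (subfun f V))) Set.finite_univ
  rw [Set.ncard_univ, Nat.card_eq_fintype_card, Fintype.card_fun, Fintype.card_fun] at h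
  simpa [numSubfuns, Fintype.card_coe] using h

lemma numSubfuns_le_dom {n : ℕ} (f : (Fin n → Bool) → Bool) (V : Finset (Fin n)) :
    numSubfuns f V ≤ 2^n := by
  have h : numSubfuns f V ≤ Nat.card ({i : Fin n // i ∉ V} → Bool) := by
    rw [numSubfuns, ← Set.image_univ, ← Set.ncard_univ]
    exact Set.ncard_image_le Set.finite_univ
  rw [Nat.card_eq_fintype_card, Fintype.card_fun] at h
  refine h.trans ?_
  apply Nat.pow_le_pow_right (by norm_num)
  calc Fintype.card {i : Fin n // i ∉ V} ≤ Fintype.card (Fin n) := Fintype.card_subtype_le _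
    _ = n := Fintype.card_fin n

lemma block_bound {b : ℕ → ℕ} (hb : IsNeciporuk (fun _ f => BFc f) b) {n : ℕ} (hn : 2 ≤ n)
    (f : (Fin n → Bool) → Bool) (V : Finset (Fin n)) (hV : 1 ≤ V.card) :
    b (numSubfuns f V) * Nat.log 2 n ≤ 12 * V.card * n := by
  have hmono := hb.1
  set v := V.card with hvdef
  set r := numSubfuns f V with hrdef
  have hr1 : 0 < r := numSubfuns_pos f V
  by_cases hcase : 2^v ≤ n
  · have h1 : b r ≤ 3 * 2^v :=
      le_trans (hmono r (2^(2^v)) hr1 (numSubfuns_le_pow f V)) (key_bound hb hV)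
    have h2 := lemmaN hV hcase
    calc b r * Nat.log 2 n ≤ (3 * 2^v) * Nat.log 2 n := Nat.mul_le_mul_right _ h1
      _ = 3 * (2^v * Nat.log 2 n) := by ring
      _ ≤ 3 * (2 * v * n) := Nat.mul_le_mul_left _ h2
      _ ≤ 12 * v * n := by nlinarith
  · set v' := Nat.clog 2 n with hv'def
    have hv' : 1 ≤ v' := Nat.clog_pos one_lt_two hn
    have hn2 : n ≤ 2^v' := Nat.le_pow_clog one_lt_two n
    have hbr : b r ≤ 3 * 2^v' := by
      refine le_trans (hmono r (2^(2^v')) hr1 ?_) (key_bound hb hv')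
      calc r ≤ 2^n := numSubfuns_le_dom f V
        _ ≤ 2^(2^v') := Nat.pow_le_pow_right (by norm_num) hn2
    have h2v' : 2^v' ≤ 2 * n := by
      have hlt : 2 ^ (v' - 1) < n := by
        simpa [Nat.pred_eq_sub_one] using Nat.pow_pred_clog_lt_self one_lt_two hn
      have hsplit : 2^v' = 2 * 2^(v' - 1) := by
        rw [← pow_succ']
        congr 1
        omega
      omega
    have hL : Nat.log 2 n ≤ v := by
      calc Nat.log 2 n ≤ Nat.log 2 (2^v) := Nat.log_mono_right (by omega)
        _ = v := Nat.log_pow one_lt_two v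
    calc b r * Nat.log 2 n ≤ (3 * 2^v') * v := Nat.mul_le_mul hbr hL
      _ ≤ (3 * (2 * n)) * v := Nat.mul_le_mul_right _ (Nat.mul_le_mul_left _ h2v')
      _ = 6 * n * v := by ring
      _ ≤ 12 * v * n := by nlinarith

theorem stmt19 (F : ∀ n : ℕ, (Fin n → Bool) → Bool) :
    ∃ c : ℝ, 0 < c ∧ ∃ n₀ : ℕ, ∀ n : ℕ, n₀ ≤ n →
      ∀ b : ℕ → ℕ, IsNeciporuk (fun _ f => BFc f) b →
        ∀ (p : ℕ) (V : Fin p → Finset (Fin n)), IsPartition V →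
          ((∑ i, b (numSubfuns (F n) (V i)) : ℕ) : ℝ)
            ≤ c * (n : ℝ)^2 / Real.logb 2 (n : ℝ) := by
  refine ⟨24, by norm_num, 2, fun n hn b hb p V hV => ?_⟩
  obtain ⟨hne, hdisj, -⟩ := hV
  classical
  have hcard : ∑ i, (V i).card ≤ n := by
    rw [← Finset.card_biUnion (fun i _ j _ hij => hdisj i j hij)]
    calc (Finset.univ.biUnion V).card ≤ Fintype.card (Fin n) := Finset.card_le_univ _
      _ = n := Fintype.card_fin n
  have hblock : ∀ i, b (numSubfuns (F n) (V i)) * Nat.log 2 n ≤ 12 * (V i).card * n :=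
    fun i => block_bound hb hn (F n) (V i) (Finset.card_pos.mpr (hne i))
  set S := ∑ i, b (numSubfuns (F n) (V i)) with hSdef
  set L := Nat.log 2 n with hLdef
  have hSL : S * L ≤ 12 * n * n := by
    rw [hSdef, Finset.sum_mul]
    calc ∑ i, b (numSubfuns (F n) (V i)) * L ≤ ∑ i, 12 * (V i).card * n :=
          Finset.sum_le_sum (fun i _ => hblock i)
      _ = ∑ i, (12 * n) * (V i).card := Finset.sum_congr rfl (fun i _ => by ring)
      _ = (12 * n) * ∑ i, (V i).card := by rw [Finset.mul_sum]
      _ ≤ (12 * n) * n := Nat.mul_le_mul_left _ hcard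
      _ = 12 * n * n := by ring
  have hL1 : 1 ≤ L := Nat.log_pos one_lt_two hn
  have hlogb_pos : 0 < Real.logb 2 (n : ℝ) :=
    Real.logb_pos (by norm_num) (by exact_mod_cast Nat.lt_of_lt_of_le one_lt_two hn)
  rw [le_div_iff₀ hlogb_pos]
  have hlogb_le : Real.logb 2 (n : ℝ) ≤ 2 * (L : ℝ) := by
    have hnpow : (n : ℝ) ≤ (2 : ℝ)^(L + 1) := by
      exact_mod_cast (Nat.lt_pow_succ_log_self one_lt_two n).le
    have hmon : Real.logb 2 (n : ℝ) ≤ Real.logb 2 ((2 : ℝ)^(L + 1)) := by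
      rw [Real.logb_le_logb (by norm_num) (by positivity) (by positivity)]
      exact hnpow
    rw [Real.logb_pow, Real.logb_self_eq_one (by norm_num)] at hmon
    push_cast at hmon ⊢
    have : (1 : ℝ) ≤ (L : ℝ) := by exact_mod_cast hL1
    linarith
  have hcast : (S : ℝ) * (L : ℝ) ≤ 12 * (n : ℝ) * (n : ℝ) := by exact_mod_cast hSL
  calc (S : ℝ) * Real.logb 2 (n : ℝ) ≤ (S : ℝ) * (2 * (L : ℝ)) :=
        mul_le_mul_of_nonneg_left hlogb_le (Nat.cast_nonneg _)
    _ = 2 * ((S : ℝ) * (L : ℝ)) := by ring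
    _ ≤ 2 * (12 * (n : ℝ) * (n : ℝ)) := by linarith
    _ = 24 * (n : ℝ)^2 := by ring
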